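/- arXiv:1807.05804 — 5 statements merged into one kernel-verified Lean document; each statement's English description precedes it below -/
import Mathlib

section
/- Let q > 8 be prime with q ≡ 1 (mod 4), ω = (1+√q)/2, ω̃ = (1-√q)/2. If α = a+bω with a,b ∈ ℤ, b > 0, and N(α) = αα̃ < 0, and a + b/2 ≠ 0, then 1/2 ≤ |a + b/2| < b√q/2, and |log(α/(-α̃))| ≥ 2·(2(a+b/2))/(b√q) in absolute value, i.e. |log|α/α̃|| ≥ (4|a+b/2|)/(b√q) ≥ 2/(b√q). -/
lemma aux_log (r : ℝ) (h0 : 0 ≤ r) (h1 : r < 1) :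
    2 * r ≤ Real.log ((1 + r) / (1 - r)) := by
  have key : ∀ x ∈ Set.Icc (0:ℝ) r, HasDerivAt
      (fun x => Real.log (1 + x) - Real.log (1 - x) - 2 * x)
      (1 / (1 + x) + 1 / (1 - x) - 2) x := by
    intro x hx
    obtain ⟨hx0, hxr⟩ := hx
    have hp : (0:ℝ) < 1 + x := by linarith
    have hm : (0:ℝ) < 1 - x := by linarith
    have d1 : HasDerivAt (fun x : ℝ => Real.log (1 + x)) (1 / (1 + x)) x := by
      have : HasDerivAt (fun x : ℝ => 1 + x) 1 x := (hasDerivAt_id x).const_add 1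
      simpa using this.log hp.ne'
    have d2 : HasDerivAt (fun x : ℝ => Real.log (1 - x)) ((-1) / (1 - x)) x := by
      have : HasDerivAt (fun x : ℝ => 1 - x) (-1) x := by
        exact (hasDerivAt_id x).const_sub 1
      simpa using this.log hm.ne'
    have d3 : HasDerivAt (fun x : ℝ => 2 * x) 2 x := by
      simpa using (hasDerivAt_id x).const_mul 2
    have := (d1.sub d2).sub d3
    exact this.congr_deriv (by ring)
  have mono : MonotoneOn (fun x => Real.log (1 + x) - Real.log (1 - x) - 2 * x)
      (Set.Icc (0:ℝ) r) := by
    apply monotoneOn_of_deriv_nonneg (convex_Icc 0 r)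
    · exact fun x hx => ((key x hx).continuousAt).continuousWithinAt
    · intro x hx
      rw [interior_Icc] at hx
      exact ((key x ⟨hx.1.le, hx.2.le⟩).differentiableAt).differentiableWithinAt
    · intro x hx
      rw [interior_Icc] at hx
      rw [(key x ⟨hx.1.le, hx.2.le⟩).deriv]
      have hp : (0:ℝ) < 1 + x := by linarith [hx.1]
      have hm : (0:ℝ) < 1 - x := by linarith [hx.2, h1]
      rw [div_add_div _ _ hp.ne' hm.ne', sub_nonneg, le_div_iff₀ (by positivity)]
      nlinarith [sq_nonneg x]
  have h := mono (Set.left_mem_Icc.2 h0) (Set.right_mem_Icc.2 h0) h0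
  simp only [Real.log_one, mul_zero, sub_zero] at h
  have hp : (0:ℝ) < 1 + r := by linarith
  have hm : (0:ℝ) < 1 - r := by linarith
  rw [Real.log_div hp.ne' hm.ne']
  simpa using h

theorem stmt4 (q : ℕ) (hq : Nat.Prime q) (hq8 : 8 < q) (hq4 : q % 4 = 1)
    (a b : ℤ) (hb : 0 < b)
    (hN : (((a : ℝ) + (b : ℝ) * ((1 + Real.sqrt q) / 2)) *
        ((a : ℝ) + (b : ℝ) * ((1 - Real.sqrt q) / 2))) < 0)
    (ha : (a : ℝ) + (b : ℝ) / 2 ≠ 0) :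
    (1 / 2 : ℝ) ≤ |(a : ℝ) + (b : ℝ) / 2| ∧
    |(a : ℝ) + (b : ℝ) / 2| < (b : ℝ) * Real.sqrt q / 2 ∧
    (4 * |(a : ℝ) + (b : ℝ) / 2|) / ((b : ℝ) * Real.sqrt q) ≤
      abs (Real.log (abs (((a : ℝ) + (b : ℝ) * ((1 + Real.sqrt q) / 2)) /
        ((a : ℝ) + (b : ℝ) * ((1 - Real.sqrt q) / 2))))) ∧
    2 / ((b : ℝ) * Real.sqrt q) ≤
      (4 * |(a : ℝ) + (b : ℝ) / 2|) / ((b : ℝ) * Real.sqrt q) := by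
  have hq0 : (0:ℝ) < Real.sqrt q := Real.sqrt_pos.2 (by positivity)
  have hbR : (0:ℝ) < (b:ℝ) := by exact_mod_cast hb
  set rq := Real.sqrt q with hrq
  set s : ℝ := (a:ℝ) + (b:ℝ) / 2 with hs
  set d : ℝ := (b:ℝ) * rq / 2 with hd
  have hd0 : 0 < d := by positivity
  have e1 : (a : ℝ) + (b : ℝ) * ((1 + rq) / 2) = s + d := by rw [hs, hd]; ring
  have e2 : (a : ℝ) + (b : ℝ) * ((1 - rq) / 2) = s - d := by rw [hs, hd]; ring
  rw [e1, e2] at hN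
  have habs : |s| < d := by nlinarith [abs_nonneg s, sq_abs s]
  obtain ⟨hL, hR⟩ := abs_lt.1 habs
  have hsd1 : 0 < s + d := by linarith
  have hsd2 : s - d < 0 := by linarith
  -- part 1
  have h2ab : (2 * a + b : ℤ) ≠ 0 := by
    intro h
    apply ha
    have h0 : ((2 * a + b : ℤ) : ℝ) = 0 := by rw [h]; simp
    push_cast at h0
    rw [hs]
    linarith
  have h1R : (1:ℝ) ≤ |2 * (a:ℝ) + (b:ℝ)| := by
    have h1 := Int.one_le_abs h2ab
    exact_mod_cast h1
  have h2s : 2 * (a:ℝ) + (b:ℝ) = 2 * s := by rw [hs]; ring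
  rw [h2s, abs_mul] at h1R
  simp only [abs_two] at h1R
  have part1 : (1/2 : ℝ) ≤ |s| := by linarith
  refine ⟨part1, habs, ?_, ?_⟩
  · -- part 3
    rw [e1, e2]
    have habsdiv : |(s + d) / (s - d)| = (s + d) / (d - s) := by
      rw [abs_div, abs_of_pos hsd1, abs_of_neg hsd2]
      ring_nf
    rw [habsdiv]
    have hb2d : (b:ℝ) * rq = 2 * d := by rw [hd]; ring
    rw [hb2d]
    have key : 2 * |s| / d ≤ |Real.log ((s + d) / (d - s))| := by
      rcases le_or_gt 0 s with hpos | hneg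
      · -- s ≥ 0
        have hr0 : 0 ≤ s / d := div_nonneg hpos hd0.le
        have hds : 0 < d - s := by rw [abs_of_nonneg hpos] at habs; linarith
        have hr1 : s / d < 1 := (div_lt_one hd0).2 (by linarith)
        have := aux_log (s / d) hr0 hr1
        have heq : (1 + s / d) / (1 - s / d) = (s + d) / (d - s) := by
          have h1m : (0:ℝ) < 1 - s / d := by rw [sub_pos]; exact hr1
          rw [div_eq_div_iff h1m.ne' hds.ne']
          field_simp
          ring
        rw [heq] at this
        have hlogpos : 0 ≤ Real.log ((s + d) / (d - s)) := by linarith [mul_nonneg (by norm_num : (0:ℝ) ≤ 2) hr0]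
        rw [abs_of_nonneg hlogpos, abs_of_nonneg hpos]
        calc 2 * s / d = 2 * (s / d) := by ring
          _ ≤ _ := this
      · -- s < 0
        have hr0 : 0 ≤ -s / d := div_nonneg (by linarith) hd0.le
        have hr1 : -s / d < 1 := (div_lt_one hd0).2 (by rw [abs_of_neg hneg] at habs; linarith)
        have := aux_log (-s / d) hr0 hr1
        have heq : (1 + -s / d) / (1 - -s / d) = (d - s) / (s + d) := by
          have h1d : (0:ℝ) < 1 - -s / d := by
            rw [sub_pos]; exact hr1
          rw [div_eq_div_iff h1d.ne' hsd1.ne']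
          field_simp
          ring
        rw [heq] at this
        have hinv : Real.log ((d - s) / (s + d)) = - Real.log ((s + d) / (d - s)) := by
          rw [← Real.log_inv]
          congr 1
          rw [inv_div]
        rw [hinv] at this
        have : Real.log ((s + d) / (d - s)) ≤ -(2 * (-s / d)) := by linarith
        calc 2 * |s| / d = 2 * (-s / d) := by rw [abs_of_neg hneg]; ring
          _ ≤ -Real.log ((s + d) / (d - s)) := by linarith
          _ ≤ |Real.log ((s + d) / (d - s))| := neg_le_abs _
    calc 4 * |s| / (2 * d) = 2 * |s| / d := by field_simp; ring
      _ ≤ _ := key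
  · -- part 4
    gcongr
    linarith
end

section
/- Let q > 8 be prime, q ≡ 1 (mod 4), and let ε_q be the fundamental unit of ℚ(√q). For a nonzero ideal 𝔞 = (α) of the ring of integers with angle t_𝔞 defined by e^{t_𝔞} = |α/α̃| (well-defined mod 2·log ε_q), if t_𝔞 ≢ 0 (mod 2 log ε_q), then min_{n∈ℤ} |t_𝔞/(2 log ε_q) − n| ≥ c/√(N(𝔞)) for some constant c > 0 depending only on q. -/
def pmul (m : ℤ) (p r : ℤ × ℤ) : ℤ × ℤ :=
  (p.1 * r.1 + m * (p.2 * r.2), p.1 * r.2 + p.2 * r.1 + p.2 * r.2)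

def ppow (m : ℤ) (p : ℤ × ℤ) : ℕ → ℤ × ℤ
  | 0 => (1, 0)
  | k + 1 => pmul m (ppow m p k) p

lemma F_pmul (m : ℤ) (W : ℝ) (hW : W ^ 2 = W + m) (p r : ℤ × ℤ) :
    ((pmul m p r).1 : ℝ) + ((pmul m p r).2 : ℝ) * W
      = (((p.1 : ℝ) + (p.2 : ℝ) * W) * ((r.1 : ℝ) + (r.2 : ℝ) * W)) := by
  simp only [pmul]
  push_cast
  linear_combination (-(p.2 * r.2) : ℝ) * hW

lemma F_ppow (m : ℤ) (W : ℝ) (hW : W ^ 2 = W + m) (p : ℤ × ℤ) (k : ℕ) :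
    (((ppow m p k).1 : ℝ) + ((ppow m p k).2 : ℝ) * W)
      = (((p.1 : ℝ) + (p.2 : ℝ) * W)) ^ k := by
  induction k with
  | zero => simp [ppow]
  | succ k ih => rw [ppow, F_pmul m W hW, ih, pow_succ]

lemma exp_sub_one_le (D : ℝ) (hD : 0 ≤ D) : Real.exp D - 1 ≤ D * Real.exp D := by
  have h1 : Real.exp (-D) * Real.exp D = 1 := by rw [← Real.exp_add]; simp
  nlinarith [Real.add_one_le_exp (-D), Real.exp_pos D]

lemma gap_lemma (s : ℝ) (hs : 1 ≤ s) (x y : ℝ) (d e : ℤ)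
    (hxy : x - y = (d : ℝ) * s) (hxy2 : x + y = (e : ℝ)) (hne : |x| ≠ |y|) :
    1 ≤ |(|x| - |y|)| := by
  rcases le_or_gt 0 (x * y) with h | h
  · have hsq : (|x| - |y|) ^ 2 = (x - y) ^ 2 := by
      have : |x| * |y| = x * y := by rw [← abs_mul, abs_of_nonneg h]
      rw [sub_sq, sub_sq, sq_abs, sq_abs]
      linear_combination (-2 : ℝ) * this
    have habs : |(|x| - |y|)| = |x - y| := by
      rw [← sq_abs (|x| - |y|), ← sq_abs (x - y)] at hsq
      nlinarith [abs_nonneg (|x| - |y|), abs_nonneg (x - y)]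
    have hd : d ≠ 0 := by
      intro h0
      apply hne
      have : x = y := by rw [h0] at hxy; push_cast at hxy; linarith
      rw [this]
    rw [habs, hxy, abs_mul]
    have : (1 : ℝ) ≤ |(d : ℝ)| := by exact_mod_cast Int.one_le_abs hd
    have hs0 : |s| = s := abs_of_nonneg (by linarith)
    rw [hs0]
    nlinarith
  · have hsq : (|x| - |y|) ^ 2 = (x + y) ^ 2 := by
      have : |x| * |y| = -(x * y) := by rw [← abs_mul, abs_of_nonpos h.le]
      rw [sub_sq, add_sq, sq_abs, sq_abs]
      linear_combination (-2 : ℝ) * this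
    have habs : |(|x| - |y|)| = |x + y| := by
      rw [← sq_abs (|x| - |y|), ← sq_abs (x + y)] at hsq
      nlinarith [abs_nonneg (|x| - |y|), abs_nonneg (x + y)]
    have he : e ≠ 0 := by
      intro h0
      apply hne
      have : x = -y := by rw [h0] at hxy2; push_cast at hxy2; linarith
      rw [this, abs_neg]
    rw [habs, hxy2]
    exact_mod_cast Int.one_le_abs he

lemma one_side (L X A B : ℝ) (hL : 0 < L) (hA : 0 < A) (hB : 0 < B)
    (hlog : Real.log A - Real.log B = 2 * L * X) (hX2 : |X| ≤ 1 / 2)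
    (hBA : B ≤ A) (h1 : 1 ≤ A - B) :
    1 ≤ 2 * L * |X| * Real.exp L * Real.sqrt (A * B) := by
  set D := 2 * L * X with hD
  have hD0 : 0 ≤ D := by
    rw [← hlog]
    exact sub_nonneg.mpr (Real.log_le_log hB hBA)
  have hX0 : 0 ≤ X := by nlinarith
  have hDL : D ≤ L := by
    rw [abs_of_nonneg hX0] at hX2; nlinarith
  have hexpD : Real.exp D = A / B := by
    rw [← hlog, Real.exp_sub, Real.exp_log hA, Real.exp_log hB]
  have hAeq : A = B * Real.exp D := by rw [hexpD]; field_simp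
  have hBsq : B ≤ Real.sqrt (A * B) := by
    have : B = Real.sqrt (B * B) := (Real.sqrt_mul_self hB.le).symm
    rw [this]
    exact Real.sqrt_le_sqrt (by nlinarith)
  have hexp : Real.exp D ≤ Real.exp L := Real.exp_le_exp.mpr hDL
  rw [abs_of_nonneg hX0]
  calc (1 : ℝ) ≤ A - B := h1
    _ = B * (Real.exp D - 1) := by rw [hAeq]; ring
    _ ≤ B * (D * Real.exp D) := by
        exact mul_le_mul_of_nonneg_left (exp_sub_one_le D hD0) hB.le
    _ ≤ Real.sqrt (A * B) * (D * Real.exp L) := by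
        apply mul_le_mul hBsq _ (mul_nonneg hD0 (Real.exp_pos D).le) (Real.sqrt_nonneg _)
        exact mul_le_mul_of_nonneg_left hexp hD0
    _ = 2 * L * X * Real.exp L * Real.sqrt (A * B) := by rw [hD]; ring

/-- The angle-gap lemma (part i): for `K = ℚ(√q)` of narrow class number one with
fundamental unit `ε` of norm `-1`, if the angle `t_𝔞 = log|α/α̃|` of a nonzero
principal ideal `𝔞 = (α)` (with `α = a + bω`, `ω = (1+√q)/2`) is not `0 mod 2 log ε`,
then its distance to `ℤ`, after normalizing by `2 log ε`, is at least `c/√N(𝔞)`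
with `c > 0` depending only on `q`. -/
theorem stmt5 (q : ℕ) (hq : Nat.Prime q) (hq8 : 8 < q) (hq4 : q % 4 = 1)
    (ε : ℝ) (u v : ℤ)
    (hεdef : ε = (u : ℝ) + (v : ℝ) * ((1 + Real.sqrt q) / 2))
    (hεnorm : ε * ((u : ℝ) + (v : ℝ) * ((1 - Real.sqrt q) / 2)) = -1)
    (hε1 : 1 < ε)
    (hfund : ∀ u' v' : ℤ, 1 < (u' : ℝ) + (v' : ℝ) * ((1 + Real.sqrt q) / 2) →
      (((u' : ℝ) + (v' : ℝ) * ((1 + Real.sqrt q) / 2)) *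
        ((u' : ℝ) + (v' : ℝ) * ((1 - Real.sqrt q) / 2)) = 1 ∨
       ((u' : ℝ) + (v' : ℝ) * ((1 + Real.sqrt q) / 2)) *
        ((u' : ℝ) + (v' : ℝ) * ((1 - Real.sqrt q) / 2)) = -1) →
      ε ≤ (u' : ℝ) + (v' : ℝ) * ((1 + Real.sqrt q) / 2)) :
    ∃ c : ℝ, 0 < c ∧ ∀ a b : ℤ,
      (((a : ℝ) + (b : ℝ) * ((1 + Real.sqrt q) / 2)) *
        ((a : ℝ) + (b : ℝ) * ((1 - Real.sqrt q) / 2))) ≠ 0 →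
      (∀ n : ℤ, Real.log (abs (((a : ℝ) + (b : ℝ) * ((1 + Real.sqrt q) / 2)) /
          ((a : ℝ) + (b : ℝ) * ((1 - Real.sqrt q) / 2)))) ≠ 2 * n * Real.log ε) →
      ∀ n : ℤ,
        c / Real.sqrt (abs (((a : ℝ) + (b : ℝ) * ((1 + Real.sqrt q) / 2)) *
            ((a : ℝ) + (b : ℝ) * ((1 - Real.sqrt q) / 2)))) ≤
        |Real.log (abs (((a : ℝ) + (b : ℝ) * ((1 + Real.sqrt q) / 2)) /
            ((a : ℝ) + (b : ℝ) * ((1 - Real.sqrt q) / 2)))) / (2 * Real.log ε) - n| := by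
  set s := Real.sqrt q with hsdef
  have hq0 : (0:ℝ) ≤ q := by positivity
  have hs2 : s ^ 2 = q := Real.sq_sqrt hq0
  have hq9 : (9:ℝ) ≤ q := by exact_mod_cast (by omega : (9:ℕ) ≤ q)
  have hs0 : 0 ≤ s := Real.sqrt_nonneg _
  have hs1 : 1 ≤ s := by nlinarith
  obtain ⟨m, hm⟩ : ∃ m : ℤ, (q : ℤ) = 4 * m + 1 :=
    ⟨((q / 4 : ℕ) : ℤ), by exact_mod_cast (by omega : q = 4 * (q / 4) + 1)⟩
  have hmR : (q : ℝ) = 4 * (m : ℝ) + 1 := by exact_mod_cast hm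
  set W : ℝ := (1 + s) / 2 with hWdef
  set W' : ℝ := (1 - s) / 2 with hW'def
  have hW : W ^ 2 = W + m := by rw [hWdef]; linear_combination hs2 / 4 + hmR / 4
  have hW' : W' ^ 2 = W' + m := by rw [hW'def]; linear_combination hs2 / 4 + hmR / 4
  set L := Real.log ε with hLdef
  have hL : 0 < L := Real.log_pos hε1
  have hε0 : (0:ℝ) < ε := by linarith
  have hεne : ε ≠ 0 := ne_of_gt hε0
  set ε' : ℝ := (u : ℝ) + (v : ℝ) * W' with hε'def
  have hε'eq : ε' = -ε⁻¹ := by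
    field_simp
    linear_combination hεnorm
  have hε'ne : ε' ≠ 0 := by rw [hε'eq]; simp [hεne]
  have hε'abs : |ε'| = ε⁻¹ := by
    rw [hε'eq, abs_neg, abs_inv, abs_of_pos hε0]
  have hlogε' : Real.log |ε'| = -L := by rw [hε'abs, Real.log_inv, hLdef]
  have hcpos : (0:ℝ) < min (1/2) (1 / (2 * L * ε)) := lt_min (by norm_num) (by positivity)
  refine ⟨min (1/2) (1 / (2 * L * ε)), hcpos, ?_⟩
  intro a b h0 hT n
  set Fα := (a:ℝ) + (b:ℝ) * W with hFa
  set Gα := (a:ℝ) + (b:ℝ) * W' with hGa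
  have hFane : Fα ≠ 0 := left_ne_zero_of_mul h0
  have hGane : Gα ≠ 0 := right_ne_zero_of_mul h0
  have htt : Real.log |Fα / Gα| = Real.log |Fα| - Real.log |Gα| := by
    rw [abs_div, Real.log_div (abs_ne_zero.mpr hFane) (abs_ne_zero.mpr hGane)]
  have hNint : Fα * Gα = ((a^2 + a*b - m*b^2 : ℤ) : ℝ) := by
    rw [hFa, hGa, hWdef, hW'def]
    push_cast
    linear_combination (-(b:ℝ)^2/4) * hs2 - ((b:ℝ)^2/4) * hmR
  have hzne : (a^2 + a*b - m*b^2 : ℤ) ≠ 0 := by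
    intro h
    apply h0
    rw [hNint, h]
    norm_num
  have hN1 : (1:ℝ) ≤ |Fα * Gα| := by
    rw [hNint]
    exact_mod_cast Int.one_le_abs hzne
  have hsqrtN1 : 1 ≤ Real.sqrt |Fα * Gα| := by
    have := Real.sqrt_le_sqrt hN1
    simpa using this
  have hsqrtN0 : 0 < Real.sqrt |Fα * Gα| := lt_of_lt_of_le one_pos hsqrtN1
  -- construct the rotated element γ
  obtain ⟨cg, dg, P, Q, hFg, hGg, hPQ, hlogP, hlogQ, hPne, hQne⟩ :
      ∃ cg dg : ℤ, ∃ P Q : ℝ,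
        ((cg:ℝ) + (dg:ℝ) * W = Fα * P) ∧ ((cg:ℝ) + (dg:ℝ) * W' = Gα * Q) ∧
        (|P| * |Q| = 1) ∧ (Real.log |P| = -(n:ℝ) * L) ∧ (Real.log |Q| = (n:ℝ) * L) ∧
        P ≠ 0 ∧ Q ≠ 0 := by
    rcases le_or_gt 0 n with hn | hn
    · refine ⟨(pmul m (a, b) (ppow m (u + v, -v) n.toNat)).1,
              (pmul m (a, b) (ppow m (u + v, -v) n.toNat)).2,
              ε' ^ n.toNat, ε ^ n.toNat, ?_, ?_, ?_, ?_, ?_,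
              pow_ne_zero _ hε'ne, pow_ne_zero _ hεne⟩
      · have h2 := F_ppow m W hW (u + v, -v) n.toNat
        have hb : (((u + v : ℤ) : ℝ) + ((-v : ℤ) : ℝ) * W) = ε' := by
          rw [hε'def, hWdef, hW'def]; push_cast; ring
        rw [F_pmul m W hW, h2, hb, hFa]
      · have h2 := F_ppow m W' hW' (u + v, -v) n.toNat
        have hb : (((u + v : ℤ) : ℝ) + ((-v : ℤ) : ℝ) * W') = ε := by
          rw [hεdef, hWdef, hW'def]; push_cast; ring
        rw [F_pmul m W' hW', h2, hb, hGa]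
      · rw [abs_pow, abs_pow, hε'abs, abs_of_pos hε0, ← mul_pow,
            inv_mul_cancel₀ hεne, one_pow]
      · rw [abs_pow, Real.log_pow, hlogε']
        have : ((n.toNat : ℕ) : ℝ) = (n : ℝ) := by
          exact_mod_cast congrArg (Int.cast : ℤ → ℝ) (Int.toNat_of_nonneg hn)
        rw [this]; ring
      · rw [abs_pow, abs_of_pos hε0, Real.log_pow, ← hLdef]
        have : ((n.toNat : ℕ) : ℝ) = (n : ℝ) := by
          exact_mod_cast congrArg (Int.cast : ℤ → ℝ) (Int.toNat_of_nonneg hn)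
        rw [this]
    · refine ⟨(pmul m (a, b) (ppow m (u, v) (-n).toNat)).1,
              (pmul m (a, b) (ppow m (u, v) (-n).toNat)).2,
              ε ^ (-n).toNat, ε' ^ (-n).toNat, ?_, ?_, ?_, ?_, ?_,
              pow_ne_zero _ hεne, pow_ne_zero _ hε'ne⟩
      · have h2 := F_ppow m W hW (u, v) (-n).toNat
        have hb : (((u : ℤ) : ℝ) + ((v : ℤ) : ℝ) * W) = ε := by
          rw [hεdef, hWdef]
        rw [F_pmul m W hW, h2, hb, hFa]
      · have h2 := F_ppow m W' hW' (u, v) (-n).toNat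
        have hb : (((u : ℤ) : ℝ) + ((v : ℤ) : ℝ) * W') = ε' := by
          rw [hε'def]
        rw [F_pmul m W' hW', h2, hb, hGa]
      · rw [abs_pow, abs_pow, hε'abs, abs_of_pos hε0, ← mul_pow,
            mul_inv_cancel₀ hεne, one_pow]
      · rw [abs_pow, abs_of_pos hε0, Real.log_pow, ← hLdef]
        have : (((-n).toNat : ℕ) : ℝ) = -(n : ℝ) := by
          exact_mod_cast congrArg (Int.cast : ℤ → ℝ) (Int.toNat_of_nonneg (by omega : (0:ℤ) ≤ -n))
        rw [this]
      · rw [abs_pow, Real.log_pow, hlogε']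
        have : (((-n).toNat : ℕ) : ℝ) = -(n : ℝ) := by
          exact_mod_cast congrArg (Int.cast : ℤ → ℝ) (Int.toNat_of_nonneg (by omega : (0:ℤ) ≤ -n))
        rw [this]; ring
  set x : ℝ := (cg:ℝ) + (dg:ℝ) * W with hxdef
  set y : ℝ := (cg:ℝ) + (dg:ℝ) * W' with hydef
  have hxne : x ≠ 0 := by rw [hFg]; exact mul_ne_zero hFane hPne
  have hyne : y ≠ 0 := by rw [hGg]; exact mul_ne_zero hGane hQne
  have hA0 : 0 < |x| := abs_pos.mpr hxne
  have hB0 : 0 < |y| := abs_pos.mpr hyne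
  have hlogx : Real.log |x| = Real.log |Fα| + (-(n:ℝ) * L) := by
    rw [hFg, abs_mul,
        Real.log_mul (abs_ne_zero.mpr hFane) (abs_ne_zero.mpr hPne), hlogP]
  have hlogy : Real.log |y| = Real.log |Gα| + ((n:ℝ) * L) := by
    rw [hGg, abs_mul,
        Real.log_mul (abs_ne_zero.mpr hGane) (abs_ne_zero.mpr hQne), hlogQ]
  have hlogdiff : Real.log |x| - Real.log |y|
      = (Real.log |Fα| - Real.log |Gα|) - 2 * (n:ℝ) * L := by
    rw [hlogx, hlogy]; ring
  have hABprod : |x| * |y| = |Fα * Gα| := by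
    rw [hFg, hGg, abs_mul, abs_mul, abs_mul]
    linear_combination (|Fα| * |Gα|) * hPQ
  have hTn : Real.log |Fα| - Real.log |Gα| ≠ 2 * (n:ℝ) * L := by
    have := hT n
    rw [htt] at this
    exact this
  have hABne : |x| ≠ |y| := by
    intro h
    apply hTn
    have h2 : Real.log |x| - Real.log |y| = 0 := by rw [h]; ring
    linarith [hlogdiff]
  have hgap : 1 ≤ |(|x| - |y|)| := by
    apply gap_lemma s hs1 x y dg (2 * cg + dg) _ _ hABne
    · rw [hxdef, hydef, hWdef, hW'def]; ring
    · rw [hxdef, hydef, hWdef, hW'def]; push_cast; ring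
  rw [htt]
  set X : ℝ := (Real.log |Fα| - Real.log |Gα|) / (2 * L) - (n:ℝ) with hXdef
  rcases lt_or_ge (1/2 : ℝ) (|X|) with hX | hX
  · calc min (1/2) (1/(2*L*ε)) / Real.sqrt |Fα * Gα|
        ≤ min (1/2) (1/(2*L*ε)) := div_le_self hcpos.le hsqrtN1
      _ ≤ 1/2 := min_le_left _ _
      _ ≤ |X| := hX.le
  · have hlogX : Real.log |x| - Real.log |y| = 2 * L * X := by
      rw [hlogdiff, hXdef]
      field_simp
    have key : 1 ≤ 2 * L * |X| * Real.exp L * Real.sqrt (|x| * |y|) := by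
      rcases le_total (|y|) (|x|) with hc | hc
      · apply one_side L X (|x|) (|y|) hL hA0 hB0 hlogX hX hc
        rw [abs_of_nonneg (by linarith)] at hgap
        exact hgap
      · have h1 : 1 ≤ |y| - |x| := by
          rw [abs_of_nonpos (by linarith)] at hgap
          linarith
        have := one_side L (-X) (|y|) (|x|) hL hB0 hA0
          (by linear_combination -hlogX) (by rwa [abs_neg]) hc h1
        rw [abs_neg, mul_comm (|y|) (|x|)] at this
        exact this
    rw [hABprod, Real.exp_log hε0] at key
    rw [div_le_iff₀ hsqrtN0]
    calc min (1/2) (1/(2*L*ε)) ≤ 1/(2*L*ε) := min_le_right _ _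
      _ ≤ |X| * Real.sqrt |Fα * Gα| := by
          rw [div_le_iff₀ (by positivity : (0:ℝ) < 2*L*ε)]
          calc (1:ℝ) ≤ 2 * L * |X| * ε * Real.sqrt |Fα * Gα| := key
            _ = |X| * Real.sqrt |Fα * Gα| * (2*L*ε) := by ring
end

section
/- With the notation of the angle-gap lemma: if 𝔞, 𝔟 are nonzero ideals of the ring of integers of ℚ(√q) with t_𝔞 ≢ t_𝔟 (mod 2 log ε_q), then ‖(t_𝔞 − t_𝔟)/(2 log ε_q)‖_ℤ ≥ c/√(N(𝔞)·N(𝔟)) for a constant c > 0 depending only on q. -/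
private lemma mulRep (s : ℝ) (k : ℤ) (hs : s^2 = 4*k+1) (a₁ b₁ a₂ b₂ : ℤ) :
    ∃ A B : ℤ,
      ((a₁:ℝ) + (b₁:ℝ)*((1+s)/2)) * ((a₂:ℝ) + (b₂:ℝ)*((1+s)/2)) = (A:ℝ) + (B:ℝ)*((1+s)/2) ∧
      ((a₁:ℝ) + (b₁:ℝ)*((1-s)/2)) * ((a₂:ℝ) + (b₂:ℝ)*((1-s)/2)) = (A:ℝ) + (B:ℝ)*((1-s)/2) := by
  refine ⟨a₁*a₂ + k*(b₁*b₂), a₁*b₂+a₂*b₁+b₁*b₂, ?_, ?_⟩ <;>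
  · push_cast
    linear_combination ((b₁:ℝ)*(b₂:ℝ)/4) * hs

private lemma abs_zpow' (a : ℝ) (n : ℤ) : |a ^ n| = |a| ^ n :=
  map_zpow₀ (absHom : ℝ →*₀ ℝ) a n

private lemma zpowRep (s : ℝ) (k : ℤ) (hs : s^2 = 4*k+1) (u v : ℤ) (ε : ℝ)
    (hε : ε = (u:ℝ) + (v:ℝ)*((1+s)/2))
    (hnorm : ε * ((u:ℝ) + (v:ℝ)*((1-s)/2)) = -1) :
    ∀ n : ℤ, ∃ a b : ℤ, ε^n = (a:ℝ) + (b:ℝ)*((1+s)/2) ∧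
      ((u:ℝ) + (v:ℝ)*((1-s)/2))^n = (a:ℝ) + (b:ℝ)*((1-s)/2) := by
  have hnorm' : ((u:ℝ) + (v:ℝ)*((1+s)/2)) * ((u:ℝ) + (v:ℝ)*((1-s)/2)) = -1 := by
    rw [← hε]; exact hnorm
  have hε0 : ε ≠ 0 := by
    intro h; rw [h] at hnorm; simp at hnorm
  have hε'0 : ((u:ℝ) + (v:ℝ)*((1-s)/2)) ≠ 0 := by
    intro h; rw [h] at hnorm; simp at hnorm
  have hinv : ε⁻¹ = ((-u-v:ℤ):ℝ) + ((v:ℤ):ℝ)*((1+s)/2) := by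
    apply inv_eq_of_mul_eq_one_right
    rw [hε]
    push_cast
    linear_combination -hnorm'
  have hinv' : ((u:ℝ) + (v:ℝ)*((1-s)/2))⁻¹ = ((-u-v:ℤ):ℝ) + ((v:ℤ):ℝ)*((1-s)/2) := by
    apply inv_eq_of_mul_eq_one_right
    push_cast
    linear_combination -hnorm'
  intro n
  induction n using Int.induction_on with
  | zero => exact ⟨1, 0, by simp, by simp⟩
  | succ m ih =>
      obtain ⟨a, b, h1, h2⟩ := ih
      obtain ⟨A, B, g1, g2⟩ := mulRep s k hs a b u v
      refine ⟨A, B, ?_, ?_⟩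
      · rw [zpow_add_one₀ hε0, h1, hε, g1]
      · rw [zpow_add_one₀ hε'0, h2, g2]
  | pred m ih =>
      obtain ⟨a, b, h1, h2⟩ := ih
      obtain ⟨A, B, g1, g2⟩ := mulRep s k hs a b (-u-v) v
      refine ⟨A, B, ?_, ?_⟩
      · rw [zpow_sub_one₀ hε0, h1, hinv, g1]
      · rw [zpow_sub_one₀ hε'0, h2, hinv', g2]

private lemma auxgap (M L : ℝ) (hL : 0 < L) (hN : 1 ≤ M * L) (hgap : 1 ≤ M - L) :
    1 / (2 * Real.sqrt (M * L)) ≤ Real.log M - Real.log L := by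
  have hM : 0 < M := by linarith
  set r := Real.sqrt (M*L) with hr
  have hr0 : 0 < r := Real.sqrt_pos.mpr (by linarith)
  have hr2 : r^2 = M*L := Real.sq_sqrt (by positivity)
  have hr1 : 1 ≤ r := by nlinarith
  have hLr : L ≤ r := by nlinarith
  have hlog : 1 - L/M ≤ Real.log M - Real.log L := by
    have h := Real.add_one_le_exp (Real.log (L/M))
    rw [Real.exp_log (by positivity)] at h
    rw [Real.log_div (ne_of_gt hL) (ne_of_gt hM)] at h
    linarith
  have hkey : 1/(2*r) ≤ 1 - L/M := by
    rw [div_le_iff₀ (by positivity)]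
    rw [show (1 - L/M) = (M-L)/M by field_simp]
    rw [div_mul_eq_mul_div, le_div_iff₀ hM]
    have e1 : (1:ℝ)*(2*r-1) ≤ (M-L)*(2*r-1) :=
      mul_le_mul_of_nonneg_right (by linarith) (by linarith)
    nlinarith
  linarith

/-- The angle-gap lemma (part ii): if the angles of two nonzero principal ideals
`𝔞 = (α₁)`, `𝔟 = (α₂)` of `ℤ[(1+√q)/2]` are distinct `mod 2 log ε`, then
`‖(t_𝔞 - t_𝔟)/(2 log ε)‖_ℤ ≥ c/√(N(𝔞)N(𝔟))` with `c > 0` depending only on `q`. -/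
theorem stmt6 (q : ℕ) (hq : Nat.Prime q) (hq8 : 8 < q) (hq4 : q % 4 = 1)
    (ε : ℝ) (u v : ℤ)
    (hεdef : ε = (u : ℝ) + (v : ℝ) * ((1 + Real.sqrt q) / 2))
    (hεnorm : ε * ((u : ℝ) + (v : ℝ) * ((1 - Real.sqrt q) / 2)) = -1)
    (hε1 : 1 < ε)
    (hfund : ∀ u' v' : ℤ, 1 < (u' : ℝ) + (v' : ℝ) * ((1 + Real.sqrt q) / 2) →
      (((u' : ℝ) + (v' : ℝ) * ((1 + Real.sqrt q) / 2)) *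
        ((u' : ℝ) + (v' : ℝ) * ((1 - Real.sqrt q) / 2)) = 1 ∨
       ((u' : ℝ) + (v' : ℝ) * ((1 + Real.sqrt q) / 2)) *
        ((u' : ℝ) + (v' : ℝ) * ((1 - Real.sqrt q) / 2)) = -1) →
      ε ≤ (u' : ℝ) + (v' : ℝ) * ((1 + Real.sqrt q) / 2)) :
    ∃ c : ℝ, 0 < c ∧ ∀ a₁ b₁ a₂ b₂ : ℤ,
      (((a₁ : ℝ) + (b₁ : ℝ) * ((1 + Real.sqrt q) / 2)) *
        ((a₁ : ℝ) + (b₁ : ℝ) * ((1 - Real.sqrt q) / 2))) ≠ 0 →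
      (((a₂ : ℝ) + (b₂ : ℝ) * ((1 + Real.sqrt q) / 2)) *
        ((a₂ : ℝ) + (b₂ : ℝ) * ((1 - Real.sqrt q) / 2))) ≠ 0 →
      (∀ n : ℤ,
        Real.log (abs (((a₁ : ℝ) + (b₁ : ℝ) * ((1 + Real.sqrt q) / 2)) /
            ((a₁ : ℝ) + (b₁ : ℝ) * ((1 - Real.sqrt q) / 2)))) -
        Real.log (abs (((a₂ : ℝ) + (b₂ : ℝ) * ((1 + Real.sqrt q) / 2)) /
            ((a₂ : ℝ) + (b₂ : ℝ) * ((1 - Real.sqrt q) / 2)))) ≠ 2 * n * Real.log ε) →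
      ∀ n : ℤ,
        c / Real.sqrt (abs (((a₁ : ℝ) + (b₁ : ℝ) * ((1 + Real.sqrt q) / 2)) *
            ((a₁ : ℝ) + (b₁ : ℝ) * ((1 - Real.sqrt q) / 2))) *
          abs (((a₂ : ℝ) + (b₂ : ℝ) * ((1 + Real.sqrt q) / 2)) *
            ((a₂ : ℝ) + (b₂ : ℝ) * ((1 - Real.sqrt q) / 2)))) ≤
        |(Real.log (abs (((a₁ : ℝ) + (b₁ : ℝ) * ((1 + Real.sqrt q) / 2)) /
            ((a₁ : ℝ) + (b₁ : ℝ) * ((1 - Real.sqrt q) / 2)))) -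
          Real.log (abs (((a₂ : ℝ) + (b₂ : ℝ) * ((1 + Real.sqrt q) / 2)) /
            ((a₂ : ℝ) + (b₂ : ℝ) * ((1 - Real.sqrt q) / 2))))) / (2 * Real.log ε) - n| := by
  clear hfund hq
  set s : ℝ := Real.sqrt (q : ℝ) with hsdef
  have hq9 : (9:ℝ) ≤ (q:ℝ) := by exact_mod_cast Nat.succ_le_of_lt hq8
  have hs0 : 0 ≤ s := Real.sqrt_nonneg _
  obtain ⟨k, hk⟩ : ∃ k : ℤ, (q:ℤ) = 4*k+1 := by
    refine ⟨(q/4 : ℕ), ?_⟩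
    have := Nat.div_add_mod q 4
    rw [hq4] at this
    exact_mod_cast this.symm
  have hs : s^2 = 4*(k:ℝ)+1 := by
    rw [hsdef, Real.sq_sqrt (by positivity)]
    exact_mod_cast hk
  have hs1 : 1 ≤ s := by
    have hk2 : (2:ℤ) ≤ k := by
      have : (8:ℤ) < (q:ℤ) := by exact_mod_cast hq8
      omega
    have hk2r : (2:ℝ) ≤ (k:ℝ) := by exact_mod_cast hk2
    nlinarith [hs, hs0, hk2r]
  have hlε : 0 < Real.log ε := Real.log_pos hε1
  have hε0 : (0:ℝ) < ε := by linarith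
  have hεne : ε ≠ 0 := ne_of_gt hε0
  refine ⟨1/(4*Real.log ε), by positivity, ?_⟩
  intro a₁ b₁ a₂ b₂ hN₁ hN₂ hT n
  set P₁ : ℝ := (a₁ : ℝ) + (b₁ : ℝ) * ((1 + s) / 2) with hP₁
  set Q₁ : ℝ := (a₁ : ℝ) + (b₁ : ℝ) * ((1 - s) / 2) with hQ₁
  set P₂ : ℝ := (a₂ : ℝ) + (b₂ : ℝ) * ((1 + s) / 2) with hP₂
  set Q₂ : ℝ := (a₂ : ℝ) + (b₂ : ℝ) * ((1 - s) / 2) with hQ₂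
  have hP₁0 : P₁ ≠ 0 := left_ne_zero_of_mul hN₁
  have hQ₁0 : Q₁ ≠ 0 := right_ne_zero_of_mul hN₁
  have hP₂0 : P₂ ≠ 0 := left_ne_zero_of_mul hN₂
  have hQ₂0 : Q₂ ≠ 0 := right_ne_zero_of_mul hN₂
  -- representation of ε^(-n)
  obtain ⟨e, f, he, hf⟩ := zpowRep s k hs u v ε hεdef hεnorm (-n)
  -- the conjugate of α₂ in "+"-representation
  obtain ⟨A₀, B₀, g1, g2⟩ := mulRep s k hs a₁ b₁ (a₂+b₂) (-b₂)
  rw [show ((((a₂+b₂ : ℤ)):ℝ) + ((-b₂ : ℤ):ℝ)*((1+s)/2)) = Q₂ by rw [hQ₂]; push_cast; ring,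
    ← hP₁] at g1
  rw [show ((((a₂+b₂ : ℤ)):ℝ) + ((-b₂ : ℤ):ℝ)*((1-s)/2)) = P₂ by rw [hP₂]; push_cast; ring,
    ← hQ₁] at g2
  obtain ⟨A, B, j1, j2⟩ := mulRep s k hs A₀ B₀ e f
  rw [← g1, ← he] at j1
  rw [← g2, ← hf] at j2
  set x : ℝ := (A:ℝ) + (B:ℝ)*((1+s)/2) with hx
  set y : ℝ := (A:ℝ) + (B:ℝ)*((1-s)/2) with hy
  -- j1 : P₁ * Q₂ * ε^(-n) = x,  j2 : Q₁ * P₂ * ε'^(-n) = y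
  have hε'0 : ((u:ℝ) + (v:ℝ)*((1-s)/2)) ≠ 0 := by
    intro h; rw [h] at hεnorm; simp at hεnorm
  have hε'abs : |(u:ℝ) + (v:ℝ)*((1-s)/2)| = ε⁻¹ := by
    have h1 : ((u:ℝ) + (v:ℝ)*((1-s)/2)) = -ε⁻¹ := by
      have h2 : ε * (((u:ℝ) + (v:ℝ)*((1-s)/2)) + ε⁻¹) = 0 := by
        rw [mul_add, hεnorm, mul_inv_cancel₀ hεne]; ring
      rcases mul_eq_zero.mp h2 with h | h
      · exact absurd h hεne
      · linarith
    rw [h1, abs_neg, abs_inv, abs_of_pos hε0]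
  have hx0 : x ≠ 0 := by
    rw [← j1]
    exact mul_ne_zero (mul_ne_zero hP₁0 hQ₂0) (zpow_ne_zero _ hεne)
  have hy0 : y ≠ 0 := by
    rw [← j2]
    exact mul_ne_zero (mul_ne_zero hQ₁0 hP₂0) (zpow_ne_zero _ hε'0)
  -- logs
  have habsx : |x| = |P₁| * |Q₂| * ε^(-n) := by
    rw [← j1, abs_mul, abs_mul, abs_zpow', abs_of_pos hε0]
  have habsy : |y| = |Q₁| * |P₂| * ε^n := by
    rw [← j2, abs_mul, abs_mul, abs_zpow', hε'abs, inv_zpow, ← zpow_neg, neg_neg]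
  have hlogx : Real.log |x| = Real.log |P₁| + Real.log |Q₂| + (-n : ℤ) * Real.log ε := by
    rw [habsx, Real.log_mul (mul_ne_zero (abs_ne_zero.mpr hP₁0) (abs_ne_zero.mpr hQ₂0))
      (zpow_ne_zero _ hεne),
      Real.log_mul (abs_ne_zero.mpr hP₁0) (abs_ne_zero.mpr hQ₂0), Real.log_zpow]
  have hlogy : Real.log |y| = Real.log |Q₁| + Real.log |P₂| + (n : ℤ) * Real.log ε := by
    rw [habsy, Real.log_mul (mul_ne_zero (abs_ne_zero.mpr hQ₁0) (abs_ne_zero.mpr hP₂0))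
      (zpow_ne_zero _ hεne),
      Real.log_mul (abs_ne_zero.mpr hQ₁0) (abs_ne_zero.mpr hP₂0), Real.log_zpow]
  set T : ℝ := Real.log |P₁ / Q₁| - Real.log |P₂ / Q₂| with hTdef
  have hTxy : Real.log |x| - Real.log |y| = T - 2*(n:ℝ)*Real.log ε := by
    rw [hTdef, abs_div, abs_div,
      Real.log_div (abs_ne_zero.mpr hP₁0) (abs_ne_zero.mpr hQ₁0),
      Real.log_div (abs_ne_zero.mpr hP₂0) (abs_ne_zero.mpr hQ₂0), hlogx, hlogy]
    push_cast
    ring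
  have hne : |x| ≠ |y| := by
    intro h
    apply hT n
    have h3 : Real.log |x| = Real.log |y| := by rw [h]
    linarith [hTxy, h3]
  -- B ≠ 0 and 2A + B ≠ 0
  have hsubxy : x - y = (B:ℝ) * s := by rw [hx, hy]; ring
  have haddxy : x + y = ((2*A+B : ℤ):ℝ) := by rw [hx, hy]; push_cast; ring
  have hB : B ≠ 0 := by
    intro h
    apply hne
    rw [hx, hy, h]
    norm_num
  have hAB : 2*A+B ≠ 0 := by
    intro h
    apply hne
    have h4 : x = -y := by
      rw [h] at haddxy
      push_cast at haddxy
      linarith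
    rw [h4, abs_neg]
  -- the gap: 1 ≤ |(|x| - |y|)|
  have h1 : (1:ℝ) ≤ |x - y| := by
    rw [hsubxy, abs_mul, abs_of_nonneg hs0]
    have hB1 : (1:ℝ) ≤ |(B:ℝ)| := by exact_mod_cast Int.one_le_abs hB
    have h6 : (1:ℝ)*1 ≤ |(B:ℝ)| * s := mul_le_mul hB1 hs1 (by norm_num) (abs_nonneg _)
    linarith
  have h2 : (1:ℝ) ≤ |x + y| := by
    rw [haddxy]
    exact_mod_cast Int.one_le_abs hAB
  have hgap : (1:ℝ) ≤ |(|x| - |y|)| := by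
    rcases abs_cases x with ⟨hxa, _⟩ | ⟨hxa, _⟩ <;> rcases abs_cases y with ⟨hya, _⟩ | ⟨hya, _⟩ <;>
      rw [hxa, hya]
    · exact h1
    · rw [sub_neg_eq_add]; exact h2
    · rw [show -x - y = -(x+y) by ring, abs_neg]; exact h2
    · rw [show -x - -y = -(x-y) by ring, abs_neg]; exact h1
  -- the norm
  have hxyprod : |x| * |y| = |P₁ * Q₁| * |P₂ * Q₂| := by
    rw [habsx, habsy, abs_mul P₁ Q₁, abs_mul P₂ Q₂]
    have hzz : ε^(-n) * ε^n = 1 := by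
      rw [← zpow_add₀ hεne]
      simp
    linear_combination (|P₁| * |Q₂| * |Q₁| * |P₂|) * hzz
  have hNint : x * y = ((A^2 + A*B - k*B^2 : ℤ):ℝ) := by
    rw [hx, hy]
    push_cast
    linear_combination (-(B:ℝ)^2/4) * hs
  have hN1 : (1:ℝ) ≤ |x| * |y| := by
    rw [← abs_mul, hNint]
    have h0 : (A^2 + A*B - k*B^2 : ℤ) ≠ 0 := by
      intro h
      apply mul_ne_zero hx0 hy0
      rw [hNint, h]
      simp
    exact_mod_cast Int.one_le_abs h0
  -- main inequality
  have hmain : 1/(2*Real.sqrt (|x| * |y|)) ≤ |(Real.log |x| - Real.log |y|)| := by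
    rcases le_total |y| |x| with hc | hc
    · have hg : 1 ≤ |x| - |y| := by
        rwa [abs_of_nonneg (sub_nonneg.mpr hc)] at hgap
      exact le_trans (auxgap |x| |y| (abs_pos.mpr hy0) hN1 hg) (le_abs_self _)
    · have hg : 1 ≤ |y| - |x| := by
        rw [abs_sub_comm] at hgap
        rwa [abs_of_nonneg (sub_nonneg.mpr hc)] at hgap
      have h5 := auxgap |y| |x| (abs_pos.mpr hx0) (by rw [mul_comm]; exact hN1) hg
      rw [mul_comm |y| |x|] at h5
      exact le_trans h5 ((le_abs_self _).trans (le_of_eq (abs_sub_comm _ _)))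
  -- assemble
  have hlne : (2*Real.log ε) ≠ 0 := by positivity
  have hrw : T / (2*Real.log ε) - n = (Real.log |x| - Real.log |y|) / (2*Real.log ε) := by
    rw [hTxy]
    field_simp
  rw [hrw, abs_div, abs_of_pos (by positivity : (0:ℝ) < 2*Real.log ε)]
  rw [show |P₁*Q₁| * |P₂*Q₂| = |x| * |y| from hxyprod.symm]
  rw [div_le_div_iff₀ (by positivity) (by positivity)]
  have hsq : (0:ℝ) < Real.sqrt (|x| * |y|) := Real.sqrt_pos.mpr (by positivity)
  have hstep : (1/(2*Real.sqrt (|x| * |y|))) * Real.sqrt (|x| * |y|) ≤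
      |(Real.log |x| - Real.log |y|)| * Real.sqrt (|x| * |y|) :=
    mul_le_mul_of_nonneg_right hmain hsq.le
  have e1 : (1/(2*Real.sqrt (|x| * |y|))) * Real.sqrt (|x| * |y|) = 1/2 := by
    field_simp
  have e2 : 1/(4*Real.log ε) * (2*Real.log ε) = 1/2 := by
    field_simp
    ring
  linarith
end

section
/- Let q ≡ 1 (mod 4) be prime, ω = (1+√q)/2, ω̃ = (1-√q)/2. Suppose α₁ = a₁+b₁ω and α₂ = a₂+b₂ω are real quadratic integers with gcd(a₁,b₁) = gcd(a₂,b₂) = 1, b₁ ≠ 0, b₂ ≠ 0, and both have positive (or both negative) norm. If α₁/α̃₁ = α₂/α̃₂ (where α̃ᵢ = aᵢ+bᵢω̃), then a₁/b₁ = a₂/b₂, and hence (a₁,b₁) = ±(a₂,b₂). -/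
theorem stmt7 (q : ℕ) (hq : Nat.Prime q) (hq4 : q % 4 = 1)
    (a₁ b₁ a₂ b₂ : ℤ)
    (h₁ : Int.gcd a₁ b₁ = 1) (h₂ : Int.gcd a₂ b₂ = 1)
    (hb₁ : b₁ ≠ 0) (hb₂ : b₂ ≠ 0)
    (hsign :
      (0 < ((a₁ : ℝ) + (b₁ : ℝ) * ((1 + Real.sqrt q) / 2)) *
          ((a₁ : ℝ) + (b₁ : ℝ) * ((1 - Real.sqrt q) / 2)) ∧
        0 < ((a₂ : ℝ) + (b₂ : ℝ) * ((1 + Real.sqrt q) / 2)) *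
          ((a₂ : ℝ) + (b₂ : ℝ) * ((1 - Real.sqrt q) / 2))) ∨
      (((a₁ : ℝ) + (b₁ : ℝ) * ((1 + Real.sqrt q) / 2)) *
          ((a₁ : ℝ) + (b₁ : ℝ) * ((1 - Real.sqrt q) / 2)) < 0 ∧
        ((a₂ : ℝ) + (b₂ : ℝ) * ((1 + Real.sqrt q) / 2)) *
          ((a₂ : ℝ) + (b₂ : ℝ) * ((1 - Real.sqrt q) / 2)) < 0))
    (heq : ((a₁ : ℝ) + (b₁ : ℝ) * ((1 + Real.sqrt q) / 2)) /
        ((a₁ : ℝ) + (b₁ : ℝ) * ((1 - Real.sqrt q) / 2)) =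
      ((a₂ : ℝ) + (b₂ : ℝ) * ((1 + Real.sqrt q) / 2)) /
        ((a₂ : ℝ) + (b₂ : ℝ) * ((1 - Real.sqrt q) / 2))) :
    a₁ * b₂ = a₂ * b₁ ∧ ((a₁ = a₂ ∧ b₁ = b₂) ∨ (a₁ = -a₂ ∧ b₁ = -b₂)) := by
  have hqpos : (0:ℝ) < Real.sqrt q := Real.sqrt_pos.mpr (by exact_mod_cast hq.pos)
  have hd₁ : ((a₁ : ℝ) + (b₁ : ℝ) * ((1 - Real.sqrt q) / 2)) ≠ 0 := by
    rcases hsign with ⟨h, _⟩ | ⟨h, _⟩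
    · exact fun h0 => by simp [h0] at h
    · exact fun h0 => by simp [h0] at h
  have hd₂ : ((a₂ : ℝ) + (b₂ : ℝ) * ((1 - Real.sqrt q) / 2)) ≠ 0 := by
    rcases hsign with ⟨_, h⟩ | ⟨_, h⟩
    · exact fun h0 => by simp [h0] at h
    · exact fun h0 => by simp [h0] at h
  rw [div_eq_div_iff hd₁ hd₂] at heq
  have hkeyR : ((a₁ * b₂ - a₂ * b₁ : ℤ) : ℝ) * Real.sqrt q = 0 := by
    push_cast
    linear_combination -heq
  have hkey : a₁ * b₂ = a₂ * b₁ := by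
    have := mul_eq_zero.mp hkeyR
    rcases this with h | h
    · have : (a₁ * b₂ - a₂ * b₁ : ℤ) = 0 := by exact_mod_cast h
      linarith
    · exact absurd h (ne_of_gt hqpos)
  refine ⟨hkey, ?_⟩
  have hc₁ : IsCoprime a₁ b₁ := Int.isCoprime_iff_gcd_eq_one.mpr h₁
  have hc₂ : IsCoprime a₂ b₂ := Int.isCoprime_iff_gcd_eq_one.mpr h₂
  have hdvd₁ : b₁ ∣ b₂ := hc₁.symm.dvd_of_dvd_mul_left ⟨a₂, by linarith⟩
  have hdvd₂ : b₂ ∣ b₁ := hc₂.symm.dvd_of_dvd_mul_left ⟨a₁, by linarith⟩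
  have hassoc : b₁ = b₂ ∨ b₁ = -b₂ :=
    Int.associated_iff.mp (associated_of_dvd_dvd hdvd₁ hdvd₂)
  rcases hassoc with h | h
  · left
    refine ⟨mul_right_cancel₀ hb₂ ?_, h⟩
    rw [hkey, h]
  · right
    refine ⟨?_, h⟩
    have : a₁ * b₂ = -a₂ * b₂ := by rw [hkey, h]; ring
    exact mul_right_cancel₀ hb₂ this
end

section
/- Let K ≥ 2 and N ≥ 2 be real numbers, and let t₁ < t₂ < ... < t_R be real numbers in [0,1) with pairwise distances (measured mod 1, i.e. ‖t_r − t_s‖_ℤ) at least δ > 0 where δ ≥ c/N. Then for any complex numbers (c_r)_{1≤r≤R}, Σ_{1≤k≤K} |Σ_{r=1}^R c_r e^{2πi k t_r}|² ≤ C·(K + N/c)·Σ_{r=1}^R |c_r|² for an absolute constant C. -/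
open Complex Finset

noncomputable def ls13E (y : ℝ) : ℂ := Complex.exp (2 * Real.pi * Complex.I * y)

lemma ls13E_add (x y : ℝ) : ls13E (x + y) = ls13E x * ls13E y := by
  unfold ls13E; rw [← Complex.exp_add]; push_cast; ring_nf

lemma ls13E_zero : ls13E 0 = 1 := by simp [ls13E]

lemma ls13E_norm (y : ℝ) : ‖ls13E y‖ = 1 := by
  unfold ls13E
  rw [Complex.norm_exp]
  norm_num [Complex.mul_re, Complex.mul_im]

lemma ls13E_int (n : ℤ) : ls13E n = 1 := by
  unfold ls13E
  rw [show 2 * (Real.pi:ℂ) * Complex.I * (n:ℝ) = (n:ℤ) * (2 * Real.pi * Complex.I) by push_cast; ring]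
  exact Complex.exp_int_mul_two_pi_mul_I n

lemma ls13E_conj (y : ℝ) : (starRingEnd ℂ) (ls13E y) = ls13E (-y) := by
  unfold ls13E
  rw [← Complex.exp_conj]
  rw [show 2 * (Real.pi:ℂ) * Complex.I * (y:ℝ) = ((2*Real.pi*y : ℝ):ℂ) * Complex.I by push_cast; ring]
  rw [map_mul, Complex.conj_ofReal, Complex.conj_I]
  push_cast; ring_nf

lemma ls13E_congr {x y : ℝ} (n : ℤ) (h : x = y + n) : ls13E x = ls13E y := by
  rw [h, ls13E_add, ls13E_int, mul_one]

lemma ls13E_sub_one_norm (φ : ℝ) : ‖ls13E φ - 1‖ = 2 * |Real.sin (Real.pi * φ)| := by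
  have h1 : ls13E φ = ((Real.cos (2*(Real.pi*φ)) : ℝ) : ℂ) + ((Real.sin (2*(Real.pi*φ)) : ℝ) : ℂ) * Complex.I := by
    unfold ls13E
    rw [show (2 * (Real.pi:ℂ) * Complex.I * (φ:ℝ)) = ((2*(Real.pi*φ) : ℝ):ℂ) * Complex.I by push_cast; ring]
    rw [Complex.exp_mul_I, Complex.ofReal_cos, Complex.ofReal_sin]
  set a := Real.pi * φ
  have h2 : ls13E φ - 1 = ((Real.cos (2*a) - 1 : ℝ) : ℂ) + ((Real.sin (2*a) : ℝ) : ℂ) * Complex.I := by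
    rw [h1]; push_cast; ring
  rw [h2, Complex.norm_add_mul_I]
  rw [show (Real.cos (2*a) - 1)^2 + (Real.sin (2*a))^2 = (2 * |Real.sin a|)^2 by
    have e1 := Real.sin_sq_add_cos_sq (2*a)
    have e2 := Real.cos_two_mul a
    have e3 := Real.sin_sq_add_cos_sq a
    have e4 := _root_.sq_abs (Real.sin a)
    nlinarith]
  exact Real.sqrt_sq (by positivity)

noncomputable def ls13D (L : ℕ) (θ : ℝ) : ℂ := ∑ a ∈ Finset.range L, ls13E (a * θ)

lemma ls13D_zero (L : ℕ) : ls13D L 0 = L := by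
  simp [ls13D, ls13E_zero]

lemma ls13D_geom (L : ℕ) (θ : ℝ) : ls13D L θ = ∑ a ∈ Finset.range L, (ls13E θ)^a := by
  unfold ls13D
  refine Finset.sum_congr rfl fun a _ => ?_
  unfold ls13E
  rw [← Complex.exp_nat_mul]
  congr 1
  push_cast; ring

lemma ls13D_norm_le (L : ℕ) (φ : ℝ) (h1 : 0 < φ) (h2 : φ < 1) :
    ‖ls13D L φ‖ ≤ 1 / Real.sin (Real.pi * φ) := by
  have hsin : 0 < Real.sin (Real.pi * φ) := by
    apply Real.sin_pos_of_pos_of_lt_pi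
    · positivity
    · nlinarith [Real.pi_pos]
  have hx1 : ls13E φ ≠ 1 := by
    intro h
    have := ls13E_sub_one_norm φ
    rw [h, sub_self, norm_zero] at this
    have : |Real.sin (Real.pi * φ)| = 0 := by linarith
    rw [abs_of_pos hsin] at this
    linarith
  rw [ls13D_geom, geom_sum_eq hx1]
  rw [norm_div]
  have hnum : ‖ls13E φ ^ L - 1‖ ≤ 2 := by
    calc ‖ls13E φ ^ L - 1‖ ≤ ‖ls13E φ ^ L‖ + ‖(1:ℂ)‖ := norm_sub_le _ _
    _ ≤ 2 := by rw [norm_pow, ls13E_norm]; norm_num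
  have hden : ‖ls13E φ - 1‖ = 2 * Real.sin (Real.pi * φ) := by
    rw [ls13E_sub_one_norm, abs_of_pos hsin]
  rw [hden]
  rw [div_le_div_iff₀ (by positivity) hsin]
  calc ‖ls13E φ ^ L - 1‖ * Real.sin (Real.pi * φ) ≤ 2 * Real.sin (Real.pi * φ) := by
        apply mul_le_mul_of_nonneg_right hnum hsin.le
  _ = 1 * (2 * Real.sin (Real.pi * φ)) := by ring

lemma ls13D_congr (L : ℕ) (θ φ : ℝ) (n : ℤ) (h : θ + φ = n) :
    ‖ls13D L θ‖ = ‖ls13D L φ‖ := by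
  have : ls13D L θ = (starRingEnd ℂ) (ls13D L φ) := by
    unfold ls13D
    rw [map_sum]
    refine Finset.sum_congr rfl fun a _ => ?_
    rw [ls13E_conj]
    exact ls13E_congr (a * n) (by push_cast; nlinarith [h])
  rw [this, RCLike.norm_conj]

lemma ls13_sin_lb (φ : ℝ) (h1 : 0 < φ) (h2 : φ < 1) :
    2 * min φ (1-φ) ≤ Real.sin (Real.pi * φ) := by
  rcases le_or_gt φ (1/2) with h | h
  · rw [min_eq_left (by linarith)]
    have := Real.mul_le_sin (x := Real.pi * φ) (by positivity) (by nlinarith [Real.pi_pos])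
    calc 2 * φ = 2 / Real.pi * (Real.pi * φ) := by field_simp
    _ ≤ _ := this
  · rw [min_eq_right (by linarith)]
    have hs : Real.sin (Real.pi * φ) = Real.sin (Real.pi * (1 - φ)) := by
      rw [show Real.pi * (1 - φ) = Real.pi - Real.pi * φ by ring, Real.sin_pi_sub]
    rw [hs]
    have := Real.mul_le_sin (x := Real.pi * (1-φ)) (by nlinarith [Real.pi_pos]) (by nlinarith [Real.pi_pos])
    calc 2 * (1-φ) = 2 / Real.pi * (Real.pi * (1-φ)) := by field_simp
    _ ≤ _ := this

lemma ls13D_sq_le (L : ℕ) (θ φ : ℝ) (h1 : 0 < φ) (h2 : φ < 1) (n : ℤ) (h : θ + φ = n) :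
    ‖ls13D L θ‖^2 ≤ 1/(4*φ^2) + 1/(4*(1-φ)^2) := by
  rw [ls13D_congr L θ φ n h]
  have hsin := ls13_sin_lb φ h1 h2
  have hmin : 0 < min φ (1-φ) := lt_min h1 (by linarith)
  have hsinpos : 0 < Real.sin (Real.pi * φ) := by linarith
  have hD := ls13D_norm_le L φ h1 h2
  have hD2 : ‖ls13D L φ‖ ≤ 1 / (2 * min φ (1-φ)) := by
    refine hD.trans ?_
    apply one_div_le_one_div_of_le (by linarith) hsin
  have hsq : ‖ls13D L φ‖^2 ≤ (1 / (2 * min φ (1-φ)))^2 := by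
    apply sq_le_sq' _ hD2
    nlinarith [norm_nonneg (ls13D L φ)]
  refine hsq.trans ?_
  rcases le_total φ (1-φ) with hm | hm
  · rw [min_eq_left hm]
    have : (1 / (2*φ))^2 = 1/(4*φ^2) := by field_simp; ring
    rw [this]
    have hp : 0 < 1 - φ := by linarith
    have : 0 < 1/(4*(1-φ)^2) := by positivity
    linarith
  · rw [min_eq_right hm]
    have : (1 / (2*(1-φ)))^2 = 1/(4*(1-φ)^2) := by field_simp; ring
    rw [this]
    have : 0 < 1/(4*φ^2) := by positivity
    linarith

lemma ls13_spacing {ι : Type*} (F : Finset ι) (ψ : ι → ℝ) (δ : ℝ) (hδ : 0 < δ)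
    (hlo : ∀ i ∈ F, δ ≤ ψ i) (hsep : ∀ i ∈ F, ∀ j ∈ F, i ≠ j → δ ≤ |ψ i - ψ j|) :
    ∑ i ∈ F, 1/(ψ i)^2 ≤ 2/δ^2 := by
  classical
  set g : ι → ℕ := fun i => ⌊ψ i / δ⌋₊ with hg
  have hψpos : ∀ i ∈ F, 0 < ψ i := fun i hi => lt_of_lt_of_le hδ (hlo i hi)
  have hg1 : ∀ i ∈ F, 1 ≤ g i := by
    intro i hi
    apply Nat.le_floor
    rw [Nat.cast_one, le_div_iff₀ hδ, one_mul]
    exact hlo i hi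
  have hgle : ∀ i ∈ F, (g i : ℝ) * δ ≤ ψ i := by
    intro i hi
    have h0 : (0:ℝ) ≤ ψ i / δ := le_of_lt (div_pos (hψpos i hi) hδ)
    have := Nat.floor_le h0
    calc (g i : ℝ) * δ ≤ (ψ i / δ) * δ := by
          apply mul_le_mul_of_nonneg_right this hδ.le
    _ = ψ i := by field_simp
  have hinj : ∀ i ∈ F, ∀ j ∈ F, g i = g j → i = j := by
    intro i hi j hj hij
    by_contra hne
    have hsepij := hsep i hi j hj hne
    have b1 : (g i : ℝ) ≤ ψ i / δ := Nat.floor_le (le_of_lt (div_pos (hψpos i hi) hδ))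
    have b2 : ψ i / δ < (g i : ℝ) + 1 := Nat.lt_floor_add_one _
    have b3 : (g j : ℝ) ≤ ψ j / δ := Nat.floor_le (le_of_lt (div_pos (hψpos j hj) hδ))
    have b4 : ψ j / δ < (g j : ℝ) + 1 := Nat.lt_floor_add_one _
    have hcast : (g i : ℝ) = (g j : ℝ) := by exact_mod_cast congrArg (Nat.cast (R := ℝ)) hij
    have c1 : ψ i < ((g i:ℝ)+1)*δ := by
      have := (div_lt_iff₀ hδ).1 b2; linarith
    have c2 : ψ j < ((g j:ℝ)+1)*δ := by
      have := (div_lt_iff₀ hδ).1 b4; linarith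
    have c3 := hgle i hi
    have c4 := hgle j hj
    have habs : |ψ i - ψ j| < δ := by
      have hcastδ : (g i:ℝ)*δ = (g j:ℝ)*δ := by rw [hcast]
      rw [abs_lt]
      constructor
      · nlinarith
      · nlinarith
    linarith [le_abs_self (ψ i - ψ j), hsepij]
  calc ∑ i ∈ F, 1/(ψ i)^2 ≤ ∑ i ∈ F, 1/δ^2 * (1/((g i : ℝ))^2) := by
        apply Finset.sum_le_sum
        intro i hi
        have hgpos : (0:ℝ) < g i := by exact_mod_cast hg1 i hi
        have hle := hgle i hi
        have h2 : ((g i:ℝ)*δ)^2 ≤ ψ i ^2 := by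
          apply pow_le_pow_left₀ (by positivity) hle
        calc 1/(ψ i)^2 ≤ 1/((g i:ℝ)*δ)^2 := by
              apply one_div_le_one_div_of_le (by positivity) h2
        _ = 1/δ^2 * (1/((g i : ℝ))^2) := by
              rw [mul_pow]
              rw [one_div, mul_inv, one_div, one_div]
              ring
  _ = 1/δ^2 * ∑ i ∈ F, 1/((g i : ℝ))^2 := by rw [Finset.mul_sum]
  _ ≤ 1/δ^2 * 2 := by
        apply mul_le_mul_of_nonneg_left _ (by positivity)
        have himg : ∑ n ∈ F.image g, (1:ℝ)/(n:ℝ)^2 = ∑ i ∈ F, (1:ℝ)/((g i:ℝ))^2 :=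
          Finset.sum_image hinj
        rw [← himg]
        have hsum : ∑ n ∈ F.image g, 1/(n:ℝ)^2 ≤ Real.pi^2/6 := by
          apply sum_le_hasSum _ _ hasSum_zeta_two
          intro n _
          positivity
        refine hsum.trans ?_
        nlinarith [Real.pi_lt_d2, Real.pi_pos]
  _ = 2/δ^2 := by ring

lemma ls13_key (L : ℕ) (θ : ℝ) :
    ∑ m ∈ Finset.range L, ∑ a ∈ Finset.range L, ls13E ((m + a - ((L:ℝ)-1)) * θ)
      = ls13E (-((L:ℝ)-1) * θ) * (ls13D L θ)^2 := by
  rw [sq]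
  unfold ls13D
  rw [Finset.sum_mul_sum, Finset.mul_sum]
  refine Finset.sum_congr rfl fun m _ => ?_
  rw [Finset.mul_sum]
  refine Finset.sum_congr rfl fun a _ => ?_
  rw [← ls13E_add, ← ls13E_add]
  congr 1
  ring

lemma ls13_hnorm (z : ℂ) : ‖z‖^2 = (z * (starRingEnd ℂ) z).re := by
  rw [Complex.mul_conj]
  rw [Complex.ofReal_re]
  rw [Complex.normSq_eq_norm_sq]

lemma ls13_swap {α : Type*} [AddCommMonoid α] {ι₁ ι₂ ι₃ ι₄ : Type*}
    (A : Finset ι₁) (B : Finset ι₂) (C : Finset ι₃) (D : Finset ι₄) (F : ι₁ → ι₂ → ι₃ → ι₄ → α) :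
    ∑ m ∈ A, ∑ a ∈ B, ∑ r ∈ C, ∑ s ∈ D, F m a r s
      = ∑ r ∈ C, ∑ s ∈ D, ∑ m ∈ A, ∑ a ∈ B, F m a r s := by
  calc ∑ m ∈ A, ∑ a ∈ B, ∑ r ∈ C, ∑ s ∈ D, F m a r s
      = ∑ m ∈ A, ∑ r ∈ C, ∑ a ∈ B, ∑ s ∈ D, F m a r s :=
        Finset.sum_congr rfl fun m _ => Finset.sum_comm
  _ = ∑ r ∈ C, ∑ m ∈ A, ∑ a ∈ B, ∑ s ∈ D, F m a r s := Finset.sum_comm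
  _ = ∑ r ∈ C, ∑ m ∈ A, ∑ s ∈ D, ∑ a ∈ B, F m a r s :=
        Finset.sum_congr rfl fun r _ => Finset.sum_congr rfl fun m _ => Finset.sum_comm
  _ = ∑ r ∈ C, ∑ s ∈ D, ∑ m ∈ A, ∑ a ∈ B, F m a r s :=
        Finset.sum_congr rfl fun r _ => Finset.sum_comm

lemma ls13_expand {R : ℕ} (t : Fin R → ℝ) (coeff : Fin R → ℂ) (x : ℝ) :
    (∑ r : Fin R, coeff r * ls13E (x * t r)) *
        (starRingEnd ℂ) (∑ r : Fin R, coeff r * ls13E (x * t r))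
      = ∑ r : Fin R, ∑ s : Fin R,
          coeff r * (starRingEnd ℂ) (coeff s) * ls13E (x * (t r - t s)) := by
  rw [map_sum, Finset.sum_mul_sum]
  refine Finset.sum_congr rfl fun r _ => Finset.sum_congr rfl fun s _ => ?_
  rw [map_mul, ls13E_conj]
  calc coeff r * ls13E (x * t r) * ((starRingEnd ℂ) (coeff s) * ls13E (-(x * t s)))
      = coeff r * (starRingEnd ℂ) (coeff s) * (ls13E (x * t r) * ls13E (-(x * t s))) := by ring
  _ = coeff r * (starRingEnd ℂ) (coeff s) * ls13E (x * (t r - t s)) := by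
      rw [← ls13E_add]; congr 1; ring

lemma ls13_S {R : ℕ} (L : ℕ) (t : Fin R → ℝ) (coeff : Fin R → ℂ) :
    ∑ m ∈ Finset.range L, ∑ a ∈ Finset.range L,
        ((∑ r : Fin R, coeff r * ls13E ((↑m + ↑a - ((L:ℝ)-1)) * t r)) *
          (starRingEnd ℂ) (∑ r : Fin R, coeff r * ls13E ((↑m + ↑a - ((L:ℝ)-1)) * t r)))
      = ∑ r : Fin R, ∑ s : Fin R, coeff r * (starRingEnd ℂ) (coeff s) *
          (ls13E (-((L:ℝ)-1) * (t r - t s)) * (ls13D L (t r - t s))^2) := by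
  calc ∑ m ∈ Finset.range L, ∑ a ∈ Finset.range L,
        ((∑ r : Fin R, coeff r * ls13E ((↑m + ↑a - ((L:ℝ)-1)) * t r)) *
          (starRingEnd ℂ) (∑ r : Fin R, coeff r * ls13E ((↑m + ↑a - ((L:ℝ)-1)) * t r)))
      = ∑ m ∈ Finset.range L, ∑ a ∈ Finset.range L, ∑ r : Fin R, ∑ s : Fin R,
          coeff r * (starRingEnd ℂ) (coeff s) * ls13E ((↑m + ↑a - ((L:ℝ)-1)) * (t r - t s)) :=
        Finset.sum_congr rfl fun m _ => Finset.sum_congr rfl fun a _ => ls13_expand t coeff _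
  _ = ∑ r : Fin R, ∑ s : Fin R, ∑ m ∈ Finset.range L, ∑ a ∈ Finset.range L,
          coeff r * (starRingEnd ℂ) (coeff s) * ls13E ((↑m + ↑a - ((L:ℝ)-1)) * (t r - t s)) :=
        ls13_swap _ _ _ _ _
  _ = ∑ r : Fin R, ∑ s : Fin R, coeff r * (starRingEnd ℂ) (coeff s) *
          (ls13E (-((L:ℝ)-1) * (t r - t s)) * (ls13D L (t r - t s))^2) := by
        refine Finset.sum_congr rfl fun r _ => Finset.sum_congr rfl fun s _ => ?_
        simp only [← Finset.mul_sum]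
        rw [ls13_key]

noncomputable def ls13φ {R : ℕ} (t : Fin R → ℝ) (r s : Fin R) : ℝ :=
  if 0 < t s - t r then t s - t r else t s - t r + 1

section phi
variable {R : ℕ} {t : Fin R → ℝ} {δ : ℝ}
  (ht : ∀ r, t r ∈ Set.Ico (0:ℝ) 1)
  (hsep : ∀ r s : Fin R, r ≠ s → ∀ n : ℤ, δ ≤ |t r - t s - n|)

include ht hsep in
lemma ls13φ_mem {r s : Fin R} (hrs : r ≠ s) :
    δ ≤ ls13φ t r s ∧ ls13φ t r s ≤ 1 - δ := by
  have h0 := hsep s r hrs.symm 0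
  have h1 := hsep s r hrs.symm 1
  have hm1 := hsep s r hrs.symm (-1)
  push_cast at h0 h1 hm1
  have hts := ht s; have htr := ht r
  rw [Set.mem_Ico] at hts htr
  unfold ls13φ
  split_ifs with h
  · constructor
    · rw [sub_zero, abs_of_pos h] at h0; exact h0
    · rw [abs_of_neg (by linarith)] at h1; linarith
  · push_neg at h
    constructor
    · have hx : (0:ℝ) ≤ t s - t r - (-1) := by linarith
      rw [_root_.abs_of_nonneg hx] at hm1; linarith
    · rw [sub_zero, abs_of_nonpos (by linarith)] at h0; linarith

include hsep in
lemma ls13φ_sep_s {r s s' : Fin R} (hss : s ≠ s') :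
    δ ≤ |ls13φ t r s - ls13φ t r s'| := by
  have e0 := hsep s s' hss 0
  have e1 := hsep s s' hss 1
  have em1 := hsep s s' hss (-1)
  push_cast at e0 e1 em1
  unfold ls13φ
  split_ifs with h h' h'
  · calc δ ≤ |t s - t s' - 0| := e0
    _ = _ := by congr 1; ring
  · calc δ ≤ |t s - t s' - 1| := e1
    _ = _ := by congr 1; ring
  · calc δ ≤ |t s - t s' - (-1)| := em1
    _ = _ := by congr 1; ring
  · calc δ ≤ |t s - t s' - 0| := e0
    _ = _ := by congr 1; ring

include hsep in
lemma ls13φ_sep_r {r r' s : Fin R} (hrr : r ≠ r') :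
    δ ≤ |ls13φ t r s - ls13φ t r' s| := by
  have e0 := hsep r' r hrr.symm 0
  have e1 := hsep r' r hrr.symm 1
  have em1 := hsep r' r hrr.symm (-1)
  push_cast at e0 e1 em1
  unfold ls13φ
  split_ifs with h h' h'
  · calc δ ≤ |t r' - t r - 0| := e0
    _ = _ := by congr 1; ring
  · calc δ ≤ |t r' - t r - 1| := e1
    _ = _ := by congr 1; ring
  · calc δ ≤ |t r' - t r - (-1)| := em1
    _ = _ := by congr 1; ring
  · calc δ ≤ |t r' - t r - 0| := e0
    _ = _ := by congr 1; ring

lemma ls13φ_theta (r s : Fin R) :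
    ∃ n : ℤ, (t r - t s) + ls13φ t r s = n := by
  unfold ls13φ
  split_ifs with h
  · exact ⟨0, by push_cast; ring⟩
  · exact ⟨1, by push_cast; ring⟩

end phi

open scoped BigOperators

set_option maxHeartbeats 2000000 in
theorem stmt13 :
    ∃ C : ℝ, 0 < C ∧
      ∀ (K N c δ : ℝ) (R : ℕ) (t : Fin R → ℝ) (coeff : Fin R → ℂ),
        2 ≤ K → 2 ≤ N → 0 < c → 0 < δ → c / N ≤ δ →
        (∀ r : Fin R, t r ∈ Set.Ico (0 : ℝ) 1) →
        (∀ r s : Fin R, r ≠ s → ∀ n : ℤ, δ ≤ |t r - t s - n|) →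
        ∑ k ∈ Finset.Icc 1 ⌊K⌋₊,
            ‖∑ r : Fin R, coeff r * Complex.exp (2 * Real.pi * Complex.I * k * t r)‖ ^ 2 ≤
          C * (K + N / c) * ∑ r : Fin R, ‖coeff r‖ ^ 2 := by
  classical
  refine ⟨100, by norm_num, ?_⟩
  intro K N c δ R t coeff hK hN hc hδ hδN ht hsep
  set M := ⌊K⌋₊ with hMdef
  have hM2 : 2 ≤ M := Nat.le_floor (by exact_mod_cast hK)
  have hMK : (M:ℝ) ≤ K := Nat.floor_le (by linarith)
  set L : ℕ := max (2*M) ⌈1/δ⌉₊ with hLdef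
  have hLM : 2*M ≤ L := le_max_left _ _
  have hLδ : 1/δ ≤ (L:ℝ) := by
    have h1 : (⌈1/δ⌉₊ : ℝ) ≤ (L:ℝ) := by exact_mod_cast le_max_right (2*M) ⌈1/δ⌉₊
    exact (Nat.le_ceil _).trans h1
  have hLpos : 0 < L := lt_of_lt_of_le (by omega) hLM
  have hLreal : (0:ℝ) < (L:ℝ) := by exact_mod_cast hLpos
  have hδN' : 1/δ ≤ N/c := by
    rw [div_le_div_iff₀ hδ hc] at *
    have h0 : c/N ≤ δ := hδN
    rw [div_le_iff₀ (by linarith : (0:ℝ) < N)] at h0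
    nlinarith
  have hLup : (L:ℝ) ≤ 2*K + 1/δ + 1 := by
    rcases max_choice (2*M) ⌈1/δ⌉₊ with h | h
    · rw [hLdef, h]
      push_cast
      have : (0:ℝ) < 1/δ := by positivity
      nlinarith
    · rw [hLdef, h]
      have h2 := Nat.ceil_lt_add_one (show (0:ℝ) ≤ 1/δ by positivity)
      nlinarith
  -- the summand as a function of an integer
  set g : ℤ → ℝ := fun n => ‖∑ r : Fin R, coeff r * ls13E ((n:ℝ) * t r)‖^2 with hgdef
  have hgnn : ∀ n : ℤ, 0 ≤ g n := fun n => by positivity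
  set Sc := ∑ r : Fin R, ‖coeff r‖^2 with hSc
  have hScnn : 0 ≤ Sc := Finset.sum_nonneg fun r _ => by positivity
  -- rewrite the LHS
  have hT : ∑ k ∈ Finset.Icc 1 M,
        ‖∑ r : Fin R, coeff r * Complex.exp (2*Real.pi*Complex.I*k*t r)‖^2
      = ∑ n ∈ Finset.Icc (1:ℤ) (M:ℤ), g n := by
    apply Finset.sum_nbij' (i := fun (k:ℕ) => (k:ℤ)) (j := fun n : ℤ => n.toNat)
    · intro a ha; rw [Finset.mem_Icc] at *; omega
    · intro a ha; rw [Finset.mem_Icc] at *; omega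
    · intro a _; omega
    · intro a ha; rw [Finset.mem_Icc] at ha; omega
    · intro k _
      rw [hgdef]
      congr 2
      refine Finset.sum_congr rfl fun r _ => ?_
      congr 1
      unfold ls13E
      congr 1
      push_cast
      ring
  set T := ∑ n ∈ Finset.Icc (1:ℤ) (M:ℤ), g n with hTdef
  have hTnn : 0 ≤ T := Finset.sum_nonneg fun n _ => hgnn n
  -- window sums
  have hinner : ∀ m ∈ Finset.Icc M (L-1),
      T ≤ ∑ a ∈ Finset.range L, g ((m:ℤ) + a - ((L:ℤ)-1)) := by
    intro m hm
    rw [Finset.mem_Icc] at hm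
    have hre : ∑ a ∈ Finset.range L, g ((m:ℤ) + a - ((L:ℤ)-1))
        = ∑ n ∈ Finset.Icc ((m:ℤ) - (L:ℤ) + 1) (m:ℤ), g n := by
      apply Finset.sum_nbij' (i := fun (a:ℕ) => (m:ℤ) + a - ((L:ℤ)-1))
        (j := fun n : ℤ => (n - (m:ℤ) + (L:ℤ) - 1).toNat)
      · intro a ha; rw [Finset.mem_range] at ha; rw [Finset.mem_Icc]; omega
      · intro n hn; rw [Finset.mem_Icc] at hn; rw [Finset.mem_range]; omega
      · intro a ha; rw [Finset.mem_range] at ha; omega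
      · intro n hn; rw [Finset.mem_Icc] at hn; omega
      · intro a _; rfl
    rw [hre, hTdef]
    apply Finset.sum_le_sum_of_subset_of_nonneg
    · intro n hn
      rw [Finset.mem_Icc] at hn ⊢
      have h1 : M ≤ m := hm.1
      have h2 : m ≤ L - 1 := hm.2
      omega
    · intro n _ _; exact hgnn n
  have hSlow : ((L:ℝ) - M) * T
      ≤ ∑ m ∈ Finset.range L, ∑ a ∈ Finset.range L, g ((m:ℤ) + a - ((L:ℤ)-1)) := by
    have hcard : ((L:ℝ) - M) * T = ∑ m ∈ Finset.Icc M (L-1), T := by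
      rw [Finset.sum_const, Nat.card_Icc, nsmul_eq_mul]
      congr 1
      have : L - 1 + 1 - M = L - M := by omega
      rw [this]
      have hML : M ≤ L := by omega
      push_cast [Nat.cast_sub hML]
      ring
    rw [hcard]
    calc ∑ m ∈ Finset.Icc M (L-1), T
        ≤ ∑ m ∈ Finset.Icc M (L-1), ∑ a ∈ Finset.range L, g ((m:ℤ) + a - ((L:ℤ)-1)) :=
          Finset.sum_le_sum hinner
    _ ≤ ∑ m ∈ Finset.range L, ∑ a ∈ Finset.range L, g ((m:ℤ) + a - ((L:ℤ)-1)) := by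
          apply Finset.sum_le_sum_of_subset_of_nonneg
          · intro m hmm
            rw [Finset.mem_Icc] at hmm
            rw [Finset.mem_range]
            omega
          · intro m _ _
            exact Finset.sum_nonneg fun a _ => hgnn _
  -- expansion of the double sum
  set A : Fin R → Fin R → ℝ := fun r s => (coeff r * (starRingEnd ℂ) (coeff s) *
      (ls13E (-((L:ℝ)-1) * (t r - t s)) * (ls13D L (t r - t s))^2)).re with hA
  have hSC : ∑ m ∈ Finset.range L, ∑ a ∈ Finset.range L, g ((m:ℤ) + a - ((L:ℤ)-1))
      = ∑ r : Fin R, ∑ s : Fin R, A r s := by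
    have e1 : ∀ m ∈ Finset.range L, ∀ a ∈ Finset.range L, g ((m:ℤ) + a - ((L:ℤ)-1))
        = ((∑ r : Fin R, coeff r * ls13E (((m:ℝ) + a - ((L:ℝ)-1)) * t r)) *
           (starRingEnd ℂ) (∑ r : Fin R, coeff r * ls13E (((m:ℝ) + a - ((L:ℝ)-1)) * t r))).re := by
      intro m _ a _
      rw [hgdef]
      have harg : ((((m:ℤ) + a - ((L:ℤ)-1)) : ℤ) : ℝ) = (m:ℝ) + a - ((L:ℝ)-1) := by
        push_cast; ring
      simp only [harg]
      exact ls13_hnorm _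
    calc ∑ m ∈ Finset.range L, ∑ a ∈ Finset.range L, g ((m:ℤ) + a - ((L:ℤ)-1))
        = ∑ m ∈ Finset.range L, ∑ a ∈ Finset.range L,
            ((∑ r : Fin R, coeff r * ls13E (((m:ℝ) + a - ((L:ℝ)-1)) * t r)) *
             (starRingEnd ℂ) (∑ r : Fin R, coeff r * ls13E (((m:ℝ) + a - ((L:ℝ)-1)) * t r))).re :=
          Finset.sum_congr rfl fun m hm => Finset.sum_congr rfl fun a ha => e1 m hm a ha
    _ = (∑ m ∈ Finset.range L, ∑ a ∈ Finset.range L,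
            ((∑ r : Fin R, coeff r * ls13E (((m:ℝ) + a - ((L:ℝ)-1)) * t r)) *
             (starRingEnd ℂ) (∑ r : Fin R, coeff r * ls13E (((m:ℝ) + a - ((L:ℝ)-1)) * t r)))).re := by
          rw [Complex.re_sum]
          exact Finset.sum_congr rfl fun m _ => (Complex.re_sum _ _).symm
    _ = (∑ r : Fin R, ∑ s : Fin R, coeff r * (starRingEnd ℂ) (coeff s) *
            (ls13E (-((L:ℝ)-1) * (t r - t s)) * (ls13D L (t r - t s))^2)).re := by
          rw [ls13_S]
    _ = ∑ r : Fin R, ∑ s : Fin R, A r s := by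
          rw [Complex.re_sum]
          exact Finset.sum_congr rfl fun r _ => Complex.re_sum _ _
  -- diagonal terms
  have hdiag : ∀ r : Fin R, A r r = ‖coeff r‖^2 * (L:ℝ)^2 := by
    intro r
    rw [hA]
    simp only [sub_self, mul_zero, ls13E_zero, ls13D_zero]
    rw [one_mul, Complex.mul_conj]
    rw [show ((L:ℕ):ℂ)^2 = (((L:ℝ)^2 : ℝ) : ℂ) by push_cast; ring]
    rw [← Complex.ofReal_mul, Complex.ofReal_re]
    rw [Complex.normSq_eq_norm_sq]
  -- off-diagonal bound
  set β : Fin R → Fin R → ℝ := fun r s =>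
    (1/4)*(1/(ls13φ t r s)^2) + (1/4)*(1/(1-ls13φ t r s)^2) with hβ
  have hφmem : ∀ {r s : Fin R}, r ≠ s → δ ≤ ls13φ t r s ∧ ls13φ t r s ≤ 1 - δ :=
    fun hrs => ls13φ_mem ht hsep hrs
  have hoff : ∀ r s : Fin R, r ≠ s →
      A r s ≤ (‖coeff r‖^2/2) * β r s + (‖coeff s‖^2/2) * β r s := by
    intro r s hrs
    obtain ⟨hφ1, hφ2⟩ := hφmem hrs
    have hφpos : 0 < ls13φ t r s := lt_of_lt_of_le hδ hφ1
    have hφlt : ls13φ t r s < 1 := by linarith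
    obtain ⟨n, hn⟩ := ls13φ_theta (t := t) r s
    have hD : ‖ls13D L (t r - t s)‖^2 ≤ β r s := by
      rw [hβ]
      have hle := ls13D_sq_le L (t r - t s) (ls13φ t r s) hφpos hφlt n hn
      have e1 : 1/(4*(ls13φ t r s)^2) = (1/4)*(1/(ls13φ t r s)^2) := by
        rw [one_div, mul_inv]; norm_num
      have e2 : 1/(4*(1-ls13φ t r s)^2) = (1/4)*(1/(1-ls13φ t r s)^2) := by
        rw [one_div, mul_inv]; norm_num
      rw [e1, e2] at hle
      exact hle
    have hβnn : 0 ≤ β r s := le_trans (by positivity) hD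
    have step1 : A r s ≤ ‖coeff r‖ * ‖coeff s‖ * ‖ls13D L (t r - t s)‖^2 := by
      rw [hA]
      refine le_trans (Complex.re_le_norm _) ?_
      rw [norm_mul, norm_mul, norm_mul, norm_pow, RCLike.norm_conj, ls13E_norm, one_mul]
    have step2 : ‖coeff r‖ * ‖coeff s‖ * ‖ls13D L (t r - t s)‖^2
        ≤ (‖coeff r‖ * ‖coeff s‖) * β r s := by
      apply mul_le_mul_of_nonneg_left hD (by positivity)
    have step3 : (‖coeff r‖ * ‖coeff s‖) * β r s
        ≤ ((‖coeff r‖^2 + ‖coeff s‖^2)/2) * β r s := by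
      apply mul_le_mul_of_nonneg_right _ hβnn
      nlinarith [sq_nonneg (‖coeff r‖ - ‖coeff s‖)]
    calc A r s ≤ _ := step1
    _ ≤ _ := step2
    _ ≤ ((‖coeff r‖^2 + ‖coeff s‖^2)/2) * β r s := step3
    _ = (‖coeff r‖^2/2) * β r s + (‖coeff s‖^2/2) * β r s := by ring
  -- spacing bounds
  have hβr : ∀ r : Fin R, ∑ s ∈ Finset.univ.erase r, β r s ≤ 1/δ^2 := by
    intro r
    have hs1 : ∑ s ∈ Finset.univ.erase r, 1/(ls13φ t r s)^2 ≤ 2/δ^2 := by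
      apply ls13_spacing _ _ δ hδ
      · intro s hs
        exact (hφmem (Finset.ne_of_mem_erase hs).symm).1
      · intro s hs s' hs' hss
        exact ls13φ_sep_s hsep hss
    have hs2 : ∑ s ∈ Finset.univ.erase r, 1/(1 - ls13φ t r s)^2 ≤ 2/δ^2 := by
      apply ls13_spacing _ _ δ hδ
      · intro s hs
        have := (hφmem (Finset.ne_of_mem_erase hs).symm).2
        linarith
      · intro s hs s' hs' hss
        have := ls13φ_sep_s (t := t) (r := r) hsep hss
        calc δ ≤ |ls13φ t r s - ls13φ t r s'| := this
        _ = |(1 - ls13φ t r s) - (1 - ls13φ t r s')| := by rw [← abs_neg]; congr 1; ring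
    calc ∑ s ∈ Finset.univ.erase r, β r s
        = (1/4) * (∑ s ∈ Finset.univ.erase r, 1/(ls13φ t r s)^2)
          + (1/4) * (∑ s ∈ Finset.univ.erase r, 1/(1 - ls13φ t r s)^2) := by
          rw [hβ, Finset.sum_add_distrib, Finset.mul_sum, Finset.mul_sum]
    _ ≤ (1/4) * (2/δ^2) + (1/4) * (2/δ^2) :=
          add_le_add (mul_le_mul_of_nonneg_left hs1 (by norm_num))
            (mul_le_mul_of_nonneg_left hs2 (by norm_num))
    _ = 1/δ^2 := by ring
  have hβs : ∀ s : Fin R, ∑ r ∈ Finset.univ.erase s, β r s ≤ 1/δ^2 := by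
    intro s
    have hs1 : ∑ r ∈ Finset.univ.erase s, 1/(ls13φ t r s)^2 ≤ 2/δ^2 := by
      apply ls13_spacing _ _ δ hδ
      · intro r hr
        exact (hφmem (Finset.ne_of_mem_erase hr)).1
      · intro r hr r' hr' hrr
        exact ls13φ_sep_r hsep hrr
    have hs2 : ∑ r ∈ Finset.univ.erase s, 1/(1 - ls13φ t r s)^2 ≤ 2/δ^2 := by
      apply ls13_spacing _ _ δ hδ
      · intro r hr
        have := (hφmem (Finset.ne_of_mem_erase hr)).2
        linarith
      · intro r hr r' hr' hrr
        have := ls13φ_sep_r (t := t) (s := s) hsep hrr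
        calc δ ≤ |ls13φ t r s - ls13φ t r' s| := this
        _ = |(1 - ls13φ t r s) - (1 - ls13φ t r' s)| := by rw [← abs_neg]; congr 1; ring
    calc ∑ r ∈ Finset.univ.erase s, β r s
        = (1/4) * (∑ r ∈ Finset.univ.erase s, 1/(ls13φ t r s)^2)
          + (1/4) * (∑ r ∈ Finset.univ.erase s, 1/(1 - ls13φ t r s)^2) := by
          rw [hβ, Finset.sum_add_distrib, Finset.mul_sum, Finset.mul_sum]
    _ ≤ (1/4) * (2/δ^2) + (1/4) * (2/δ^2) :=
          add_le_add (mul_le_mul_of_nonneg_left hs1 (by norm_num))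
            (mul_le_mul_of_nonneg_left hs2 (by norm_num))
    _ = 1/δ^2 := by ring
  -- total off-diagonal bound
  have hofftotal : ∑ r : Fin R, ∑ s ∈ Finset.univ.erase r, A r s ≤ (1/δ^2) * Sc := by
    have part1 : ∑ r : Fin R, ∑ s ∈ Finset.univ.erase r, (‖coeff r‖^2/2) * β r s
        ≤ ∑ r : Fin R, (‖coeff r‖^2/2) * (1/δ^2) := by
      apply Finset.sum_le_sum; intro r _
      rw [← Finset.mul_sum]
      exact mul_le_mul_of_nonneg_left (hβr r) (by positivity)
    have hswap : ∑ r : Fin R, ∑ s ∈ Finset.univ.erase r, (‖coeff s‖^2/2) * β r s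
        = ∑ s : Fin R, ∑ r ∈ Finset.univ.erase s, (‖coeff s‖^2/2) * β r s := by
      apply Finset.sum_comm'
      intro r s
      simp only [Finset.mem_erase, Finset.mem_univ, and_true, true_and]
      exact ⟨fun h => h.symm, fun h => h.symm⟩
    have part2 : ∑ s : Fin R, ∑ r ∈ Finset.univ.erase s, (‖coeff s‖^2/2) * β r s
        ≤ ∑ s : Fin R, (‖coeff s‖^2/2) * (1/δ^2) := by
      apply Finset.sum_le_sum; intro s _
      rw [← Finset.mul_sum]
      exact mul_le_mul_of_nonneg_left (hβs s) (by positivity)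
    calc ∑ r : Fin R, ∑ s ∈ Finset.univ.erase r, A r s
        ≤ ∑ r : Fin R, ∑ s ∈ Finset.univ.erase r,
            ((‖coeff r‖^2/2) * β r s + (‖coeff s‖^2/2) * β r s) := by
          apply Finset.sum_le_sum; intro r _
          apply Finset.sum_le_sum; intro s hs
          exact hoff r s (Finset.ne_of_mem_erase hs).symm
    _ = ∑ r : Fin R, ∑ s ∈ Finset.univ.erase r, (‖coeff r‖^2/2) * β r s
        + ∑ r : Fin R, ∑ s ∈ Finset.univ.erase r, (‖coeff s‖^2/2) * β r s := by
          rw [← Finset.sum_add_distrib]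
          exact Finset.sum_congr rfl fun r _ => Finset.sum_add_distrib
    _ ≤ ∑ r : Fin R, (‖coeff r‖^2/2) * (1/δ^2) + ∑ s : Fin R, (‖coeff s‖^2/2) * (1/δ^2) := by
          refine add_le_add part1 ?_
          rw [hswap]
          exact part2
    _ = (1/δ^2) * Sc := by
          rw [hSc, Finset.mul_sum, ← Finset.sum_add_distrib]
          exact Finset.sum_congr rfl fun r _ => by ring
  have hSfull : ∑ r : Fin R, ∑ s : Fin R, A r s ≤ (L:ℝ)^2 * Sc + (1/δ^2) * Sc := by
    calc ∑ r : Fin R, ∑ s : Fin R, A r s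
        = ∑ r : Fin R, (A r r + ∑ s ∈ Finset.univ.erase r, A r s) :=
          Finset.sum_congr rfl fun r _ => (Finset.add_sum_erase _ (A r) (Finset.mem_univ r)).symm
    _ = ∑ r : Fin R, A r r + ∑ r : Fin R, ∑ s ∈ Finset.univ.erase r, A r s :=
          Finset.sum_add_distrib
    _ ≤ (L:ℝ)^2 * Sc + (1/δ^2) * Sc := by
          apply add_le_add _ hofftotal
          have : ∑ r : Fin R, A r r = ∑ r : Fin R, ‖coeff r‖^2 * (L:ℝ)^2 :=
            Finset.sum_congr rfl fun r _ => hdiag r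
          rw [this, hSc, Finset.mul_sum]
          exact le_of_eq (Finset.sum_congr rfl fun r _ => by ring)
  have key : ((L:ℝ)/2) * T ≤ ((L:ℝ)^2 + 1/δ^2) * Sc := by
    have h2ML : (2*(M:ℝ)) ≤ (L:ℝ) := by exact_mod_cast hLM
    have h1 : ((L:ℝ)/2) * T ≤ ((L:ℝ) - M) * T := by
      apply mul_le_mul_of_nonneg_right _ hTnn
      linarith
    calc ((L:ℝ)/2) * T ≤ ((L:ℝ) - M) * T := h1
    _ ≤ ∑ m ∈ Finset.range L, ∑ a ∈ Finset.range L, g ((m:ℤ) + a - ((L:ℤ)-1)) := hSlow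
    _ = ∑ r : Fin R, ∑ s : Fin R, A r s := hSC
    _ ≤ (L:ℝ)^2 * Sc + (1/δ^2) * Sc := hSfull
    _ = ((L:ℝ)^2 + 1/δ^2) * Sc := by ring
  rw [hT]
  have hNpos : (0:ℝ) < N := by linarith
  have hNc : 0 < N/c := by positivity
  have hL25 : (L:ℝ) ≤ (5/2)*(K + N/c) := by linarith [hLup, hδN', hK, hNc.le]
  have hδ2 : 1/δ^2 ≤ (L:ℝ) * (N/c) := by
    have e : 1/δ^2 = (1/δ) * (1/δ) := by ring
    rw [e]
    have h1δ : 0 < 1/δ := by positivity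
    nlinarith [hLδ, hδN']
  have e1 : (L:ℝ)^2 ≤ (5/2)*(K+N/c)*(L:ℝ) := by nlinarith [hL25, hLreal.le]
  have e2 : (L:ℝ)*(N/c) ≤ (K+N/c)*(L:ℝ) := by nlinarith [hLreal.le, hK]
  have hfin : ((L:ℝ)^2 + 1/δ^2) ≤ 50 * (K + N/c) * (L:ℝ) := by
    have hKNc : 0 < K + N/c := by linarith
    nlinarith [e1, hδ2, e2, mul_pos hKNc hLreal]
  have hkey2 : ((L:ℝ)/2) * T ≤ 50 * (K + N/c) * (L:ℝ) * Sc :=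
    key.trans (mul_le_mul_of_nonneg_right hfin hScnn)
  nlinarith [hkey2, hLreal, hTnn, hScnn]
end
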